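/- Under the kernel hypotheses on G and the hypotheses on g and σ, there is a constant K, depending only on n, K₀, λ, L and T, such that for every S ∈ [0,T), every θ, θ̂ ∈ Y[S,T], every (t,s) ∈ Δ̂[S,T] and every ξ, x ∈ ℝ^n: |S[θ](t,s,ξ,x) − S[θ̂](t,s,ξ,x)| ≤ K ∫_s^T sup_{ξ',x'∈ℝ^n} |θ_x(t,τ,ξ',x') − θ̂_x(t,τ,ξ',x')| dτ + K (T−s)^{1/2} sup_{(t',τ)∈Δ̂[S,T], ξ',x'∈ℝ^n} |θ(t',τ,ξ',x') − θ̂(t',τ,ξ',x')|. -/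

import Mathlib

open scoped ENNReal NNReal BigOperators
open Set

noncomputable section

abbrev En (n : ℕ) : Type := EuclideanSpace ℝ (Fin n)

def sing (n : ℕ) (i : Fin n) : En n := EuclideanSpace.single i (1 : ℝ)

variable {n m : ℕ}

/-- sup norm `|φ|⁽⁰⁾` over `[S,T] × ℝⁿ`. -/
def nrm0 {V : Type*} [NormedAddCommGroup V] (S T : ℝ) (φ : ℝ → En n → V) : ℝ≥0∞ :=
  ⨆ (s : Icc S T) (x : En n), (‖φ s.1 x‖₊ : ℝ≥0∞)

/-- time Hölder seminorm `⟨φ⟩ₛ^(β)` over `[S,T] × ℝⁿ`. -/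
def hS {V : Type*} [NormedAddCommGroup V] (S T β : ℝ) (φ : ℝ → En n → V) : ℝ≥0∞ :=
  ⨆ (s : Icc S T) (s' : Icc S T) (x : En n),
    (‖φ s.1 x - φ s'.1 x‖₊ : ℝ≥0∞) / ENNReal.ofReal (|s.1 - s'.1| ^ β)

/-- space Hölder seminorm `⟨φ⟩ₓ^(α)` over `[S,T] × ℝⁿ`. -/
def hX {V : Type*} [NormedAddCommGroup V] (S T α : ℝ) (φ : ℝ → En n → V) : ℝ≥0∞ :=
  ⨆ (s : Icc S T) (x : En n) (x' : En n) (_ : dist x x' ≤ 1),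
    (‖φ s.1 x - φ s.1 x'‖₊ : ℝ≥0∞) / ENNReal.ofReal (dist x x' ^ α)

/-- `⟨φ⟩^(α) = ⟨φ⟩ₛ^(α/2) + ⟨φ⟩ₓ^(α)`. -/
def hol {V : Type*} [NormedAddCommGroup V] (S T α : ℝ) (φ : ℝ → En n → V) : ℝ≥0∞ :=
  hS S T (α/2) φ + hX S T α φ

/-- `|φ|^(α)`. -/
def nrmA {V : Type*} [NormedAddCommGroup V] (S T α : ℝ) (φ : ℝ → En n → V) : ℝ≥0∞ :=
  nrm0 S T φ + hol S T α φ

/-- spatial gradient. -/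
def Dx {V : Type*} [NormedAddCommGroup V] [NormedSpace ℝ V] (φ : ℝ → En n → V) :
    ℝ → En n → (En n →L[ℝ] V) := fun s x => fderiv ℝ (φ s) x

/-- spatial Hessian. -/
def Dxx {V : Type*} [NormedAddCommGroup V] [NormedSpace ℝ V] (φ : ℝ → En n → V) :
    ℝ → En n → (En n →L[ℝ] (En n →L[ℝ] V)) :=
  fun s x => fderiv ℝ (fun y => fderiv ℝ (φ s) y) x

/-- time derivative. -/
def Dt {V : Type*} [NormedAddCommGroup V] [NormedSpace ℝ V] (φ : ℝ → En n → V) :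
    ℝ → En n → V := fun s x => deriv (fun r => φ r x) s

/-- `|φ|^(1+α)`. -/
def nrm1A {V : Type*} [NormedAddCommGroup V] [NormedSpace ℝ V] (S T α : ℝ)
    (φ : ℝ → En n → V) : ℝ≥0∞ :=
  nrm0 S T φ + nrm0 S T (Dx φ) + hol S T α (Dx φ) + hS S T ((1+α)/2) φ

/-- `|φ|^(2+α)`. -/
def nrm2A {V : Type*} [NormedAddCommGroup V] [NormedSpace ℝ V] (S T α : ℝ)
    (φ : ℝ → En n → V) : ℝ≥0∞ :=
  nrm0 S T φ + nrm0 S T (Dx φ) + nrm0 S T (Dt φ) + nrm0 S T (Dxx φ)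
    + hol S T α (Dt φ) + hol S T α (Dxx φ) + hS S T ((1+α)/2) (Dx φ)

/-- sup norm over `ℝⁿ` (time–independent functions). -/
def xnrm0 {V : Type*} [NormedAddCommGroup V] (h : En n → V) : ℝ≥0∞ :=
  ⨆ x : En n, (‖h x‖₊ : ℝ≥0∞)

/-- Hölder seminorm over `ℝⁿ`. -/
def xhol {V : Type*} [NormedAddCommGroup V] (α : ℝ) (h : En n → V) : ℝ≥0∞ :=
  ⨆ (x : En n) (x' : En n) (_ : dist x x' ≤ 1),
    (‖h x - h x'‖₊ : ℝ≥0∞) / ENNReal.ofReal (dist x x' ^ α)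

/-- `|h|^(1+α)` on `ℝⁿ`. -/
def xnrm1A {V : Type*} [NormedAddCommGroup V] [NormedSpace ℝ V] (α : ℝ)
    (h : En n → V) : ℝ≥0∞ :=
  xnrm0 h + xnrm0 (fderiv ℝ h) + xhol α (fderiv ℝ h)

/-- `|h|^(2+α)` on `ℝⁿ`. -/
def xnrm2A {V : Type*} [NormedAddCommGroup V] [NormedSpace ℝ V] (α : ℝ)
    (h : En n → V) : ℝ≥0∞ :=
  xnrm0 h + xnrm0 (fderiv ℝ h) + xnrm0 (fderiv ℝ (fderiv ℝ h))
    + xhol α (fderiv ℝ (fderiv ℝ h))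

/-- uniform parabolicity (P1). -/
def P1 (n : ℕ) (T lam0 : ℝ) (a : ℝ → En n → Fin n → Fin n → ℝ) : Prop :=
  ∀ s ∈ Icc (0:ℝ) T, ∀ x ζ : En n,
    lam0 * ‖ζ‖^2 ≤ ∑ i, ∑ j, a s x i j * ζ i * ζ j

/-- regularity of the coefficients (P2). -/
def P2 (n : ℕ) (T α K0 : ℝ) (a : ℝ → En n → Fin n → Fin n → ℝ)
    (b : ℝ → En n → Fin n → ℝ) : Prop :=
  (∀ i j, ContinuousOn (fun p : ℝ × En n => a p.1 p.2 i j) (Icc 0 T ×ˢ univ)) ∧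
  (∀ i, ContinuousOn (fun p : ℝ × En n => b p.1 p.2 i) (Icc 0 T ×ˢ univ)) ∧
  (∃ C : ℝ, ∀ s ∈ Icc (0:ℝ) T, ∀ x : En n,
      (∀ i j, |a s x i j| ≤ C) ∧ (∀ i, |b s x i| ≤ C)) ∧
  (∀ i j, ∀ s ∈ Icc (0:ℝ) T, ∀ s' ∈ Icc (0:ℝ) T, ∀ x x' : En n,
      |a s x i j - a s' x' i j| ≤ K0 * (|s - s'| ^ (α/2) + ‖x - x'‖ ^ α)) ∧
  (∀ i, ∀ s ∈ Icc (0:ℝ) T, ∀ x x' : En n,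
      |b s x i - b s x' i| ≤ K0 * ‖x - x'‖ ^ α)

/-- bounded classical solution of the backward Cauchy problem (★) on `[S,T] × ℝⁿ`. -/
def IsClassicalSol (n : ℕ) (S T : ℝ) (a : ℝ → En n → Fin n → Fin n → ℝ)
    (b : ℝ → En n → Fin n → ℝ) (f : ℝ → En n → ℝ) (h : En n → ℝ)
    (v : ℝ → En n → ℝ) : Prop :=
  (∃ C : ℝ, ∀ s ∈ Icc S T, ∀ x : En n, |v s x| ≤ C) ∧
  ContinuousOn (fun p : ℝ × En n => v p.1 p.2) (Icc S T ×ˢ univ) ∧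
  (∀ x : En n, ∀ s ∈ Icc S T, DifferentiableAt ℝ (fun r => v r x) s) ∧
  (∀ s ∈ Icc S T, ContDiff ℝ 2 (v s)) ∧
  (∀ s ∈ Icc S T, ∀ x : En n,
    Dt v s x + (∑ i, ∑ j, a s x i j * Dxx v s x (sing n i) (sing n j))
      + (∑ i, b s x i * Dx v s x (sing n i)) + f s x = 0) ∧
  (∀ x : En n, v T x = h x)


/-- the `Y[S,T]`-norm (with exponent `p`). -/
def Ynrm (n m : ℕ) (S T p : ℝ) (θ : ℝ → ℝ → En n → En n → En m) : ℝ≥0∞ :=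
  (⨆ t : Icc (0:ℝ) T,
    (∫⁻ s in Ioc (max t.1 S) T,
        (⨆ (ξ : En n) (x : En n),
          (‖fderiv ℝ (fun y => θ t.1 s ξ y) x‖₊ : ℝ≥0∞)) ^ p) ^ (1/p))
  + ⨆ (t : Icc (0:ℝ) T) (s : Icc (max t.1 S) T) (ξ : En n) (x : En n),
      (‖θ t.1 s.1 ξ x‖₊ : ℝ≥0∞)

/-- membership in `Y[S,T]`. -/
def memY (n m : ℕ) (S T p : ℝ) (θ : ℝ → ℝ → En n → En n → En m) : Prop :=
  Measurable (fun q : ℝ × ℝ × En n × En n => θ q.1 q.2.1 q.2.2.1 q.2.2.2) ∧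
  (∀ t ∈ Icc (0:ℝ) T, ∀ s ∈ Icc (max t S) T, ∀ ξ x : En n,
    DifferentiableAt ℝ (fun y => θ t s ξ y) x) ∧
  Ynrm n m S T p θ ≠ ⊤

/-- hypotheses on the kernel `G`: measurability, differentiability in the second
(space) variable, and Gaussian bounds on `G` and its spatial gradient. -/
def KernelHyp (n : ℕ) (T K0 lam : ℝ) (G : ℝ → En n → ℝ → En n → ℝ) : Prop :=
  Measurable (fun q : ℝ × En n × ℝ × En n => G q.1 q.2.1 q.2.2.1 q.2.2.2) ∧
  (∀ (s : ℝ) (x : En n) (τ : ℝ) (η : En n), 0 ≤ s → s < τ → τ ≤ T →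
    DifferentiableAt ℝ (fun y => G s y τ η) x) ∧
  (∀ (s : ℝ) (x : En n) (τ : ℝ) (η : En n), 0 ≤ s → s < τ → τ ≤ T →
    |G s x τ η|
      ≤ K0 * (τ - s) ^ (-(n : ℝ)/2) * Real.exp (-lam * ‖η - x‖^2 / (τ - s))) ∧
  (∀ (s : ℝ) (x : En n) (τ : ℝ) (η : En n), 0 ≤ s → s < τ → τ ≤ T →
    ‖fderiv ℝ (fun y => G s y τ η) x‖
      ≤ K0 * (τ - s) ^ (-((n : ℝ) + 1)/2) * Real.exp (-lam * ‖η - x‖^2 / (τ - s)))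

/-- hypotheses on `g` and `σ`: measurability, boundedness by `L`, and Lipschitz
continuity of `g` in its last three arguments with constant `L`. -/
def GSHyp (n m d : ℕ) (L : ℝ)
    (g : ℝ → ℝ → En n → En n → En m → (En d →L[ℝ] En m) → (En d →L[ℝ] En m) → En m)
    (σ : ℝ → En n → (En d →L[ℝ] En n)) : Prop :=
  Measurable (fun q : ℝ × ℝ × En n × En n × En m ×
      (En d →L[ℝ] En m) × (En d →L[ℝ] En m) =>
    g q.1 q.2.1 q.2.2.1 q.2.2.2.1 q.2.2.2.2.1 q.2.2.2.2.2.1 q.2.2.2.2.2.2) ∧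
  (∀ (t s : ℝ) (ξ x : En n) (y : En m) (z ζ : En d →L[ℝ] En m),
    ‖g t s ξ x y z ζ‖ ≤ L) ∧
  (∀ (t s : ℝ) (ξ x : En n) (y y' : En m) (z z' ζ ζ' : En d →L[ℝ] En m),
    ‖g t s ξ x y z ζ - g t s ξ x y' z' ζ'‖
      ≤ L * (‖y - y'‖ + ‖z - z'‖ + ‖ζ - ζ'‖)) ∧
  Measurable (fun p : ℝ × En n => σ p.1 p.2) ∧
  (∀ (s : ℝ) (x : En n), ‖σ s x‖ ≤ L)

/-- the nonlinear integral operator `S` associated with the mild form of the coupled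
representation PDE system for Type-II BSVIEs. -/
def Smap (n m d : ℕ) (T : ℝ) (G : ℝ → En n → ℝ → En n → ℝ)
    (g : ℝ → ℝ → En n → En n → En m → (En d →L[ℝ] En m) → (En d →L[ℝ] En m) → En m)
    (σ : ℝ → En n → (En d →L[ℝ] En n))
    (θ : ℝ → ℝ → En n → En n → En m) : ℝ → ℝ → En n → En n → En m :=
  fun t s ξ x =>
    ∫ τ in Ioc s T, ∫ η : En n,
      G s x τ η •
        g t τ ξ η (θ τ τ η η)
          ((fderiv ℝ (fun y => θ t τ ξ y) η).comp (σ τ η))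
          ((∫ ηb : En n,
              (fderiv ℝ (fun ξ' => G t ξ' τ ηb) ξ).smulRight (θ τ τ ηb ηb)).comp
            (σ τ η))

open MeasureTheory Filter
open scoped Real

/-!
The two operators integrate the same kernel `G(s,x;τ,η)` against `g`, so by the Lipschitz
bound on `g` the difference of the integrands at time `τ` is controlled by `|θ - θ̂|` (through
the `y`- and `ζ`-arguments) and by `|θ_x - θ̂_x|` (through the `z`-argument). The Gaussian
bounds give `∫ |G(s,x;τ,η)| dη ≤ C` and `∫ |∂_ξ G(t,ξ;τ,η)| dη ≤ C (τ - t)^(-1/2)` uniformly in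
the base point, so the difference at time `τ` is at most
`C L |θ - θ̂| + C L² sup |θ_x - θ̂_x|(τ) + C² L² (τ - s)^(-1/2) |θ - θ̂|`. Integrating over
`(s, T]`, the singular term gives `2 (T - s)^(1/2)` and the constant one `T - s ≤ √T (T - s)^(1/2)`.
-/

section Gaussian

variable {V : Type*} [NormedAddCommGroup V] [InnerProductSpace ℝ V] [FiniteDimensional ℝ V]
  [MeasurableSpace V] [BorelSpace V]

lemma integral_exp_neg_mul_norm_sub_sq {b : ℝ} (hb : 0 < b) (x : V) :
    ∫ v : V, Real.exp (-b * ‖v - x‖ ^ 2) = (π / b) ^ (Module.finrank ℝ V / 2 : ℝ) := by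
  rw [integral_sub_right_eq_self (fun v : V => Real.exp (-b * ‖v‖ ^ 2)) x,
    GaussianFourier.integral_rexp_neg_mul_sq_norm hb]

lemma lintegral_ofReal_exp_neg_mul_norm_sub_sq {b : ℝ} (hb : 0 < b) (x : V) :
    ∫⁻ v : V, ENNReal.ofReal (Real.exp (-b * ‖v - x‖ ^ 2))
      = ENNReal.ofReal ((π / b) ^ (Module.finrank ℝ V / 2 : ℝ)) := by
  have hpos : 0 < (π / b) ^ (Module.finrank ℝ V / 2 : ℝ) := by positivity
  rw [← integral_exp_neg_mul_norm_sub_sq hb x, ofReal_integral_eq_lintegral_ofReal]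
  · exact .of_integral_ne_zero (by rw [integral_exp_neg_mul_norm_sub_sq hb x]; exact hpos.ne')
  · exact Eventually.of_forall fun v => (Real.exp_pos _).le

lemma lintegral_enorm_le_of_le_heatKernel {E : Type*} [NormedAddCommGroup E] {F : V → E}
    {C e lam r : ℝ} (hlam : 0 < lam) (hr : 0 < r) (x : V)
    (hF : ∀ v, ‖F v‖ ≤ C * r ^ e * Real.exp (-lam * ‖v - x‖ ^ 2 / r)) :
    ∫⁻ v, ‖F v‖ₑ
      ≤ ENNReal.ofReal (C * (π / lam) ^ (Module.finrank ℝ V / 2 : ℝ)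
          * r ^ (e + Module.finrank ℝ V / 2)) := by
  set k : ℝ := Module.finrank ℝ V / 2
  have hA : 0 ≤ C * r ^ e :=
    nonneg_of_mul_nonneg_left ((norm_nonneg _).trans (hF x)) (Real.exp_pos _)
  have hscale : (π / (lam / r)) ^ k = (π / lam) ^ k * r ^ k := by
    rw [div_div_eq_mul_div, mul_div_right_comm, Real.mul_rpow (by positivity) hr.le]
  calc ∫⁻ v, ‖F v‖ₑ
      ≤ ∫⁻ v, ENNReal.ofReal (C * r ^ e)
          * ENNReal.ofReal (Real.exp (-(lam / r) * ‖v - x‖ ^ 2)) := by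
        refine lintegral_mono fun v => ?_
        rw [← ENNReal.ofReal_mul hA, ← ofReal_norm]
        refine ENNReal.ofReal_le_ofReal ((hF v).trans_eq ?_)
        ring_nf
    _ = ENNReal.ofReal (C * r ^ e * (π / (lam / r)) ^ k) := by
        rw [lintegral_const_mul _ (by fun_prop), lintegral_ofReal_exp_neg_mul_norm_sub_sq
          (div_pos hlam hr), ← ENNReal.ofReal_mul hA]
    _ = ENNReal.ofReal (C * (π / lam) ^ k * r ^ (e + k)) := by
        rw [hscale, Real.rpow_add hr]; ring_nf

end Gaussian

lemma clm_eq_sum_smulRight_sing {V : Type*} [NormedAddCommGroup V] [NormedSpace ℝ V]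
    (A : En n →L[ℝ] V) :
    A = ∑ i, (EuclideanSpace.proj (𝕜 := ℝ) i).smulRight (A (sing n i)) := by
  ext v
  conv_lhs => rw [← (EuclideanSpace.basisFun (Fin n) ℝ).toBasis.sum_repr v]
  simp [sing]

/-- Each directional derivative is an a.e. limit of measurable difference quotients. -/
lemma aemeasurable_fderiv_of_differentiableAt {α : Type*} [MeasurableSpace α] {μ : Measure α}
    {V : Type*} [NormedAddCommGroup V] [NormedSpace ℝ V] [MeasurableSpace V] [BorelSpace V]
    [SecondCountableTopology V] {F : α → En n → V} {p : α → En n}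
    (hF : Measurable (fun q : α × En n => F q.1 q.2)) (hp : Measurable p)
    (hdiff : ∀ᵐ a ∂μ, DifferentiableAt ℝ (F a) (p a)) :
    AEMeasurable (fun a => fderiv ℝ (F a) (p a)) μ := by
  have happly (v : En n) : AEMeasurable (fun a => fderiv ℝ (F a) (p a) v) μ := by
    have hc : Tendsto (fun k : ℕ => ‖(k : ℝ) + 1‖) atTop atTop :=
      (tendsto_atTop_add_const_right _ 1 tendsto_natCast_atTop_atTop).congr
        fun k => (Real.norm_of_nonneg (by positivity)).symm
    refine aemeasurable_of_tendsto_metrizable_ae atTop (fun k => Measurable.aemeasurable ?_)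
      (hdiff.mono fun a ha => ha.hasFDerivAt.lim v hc)
    exact ((hF.comp (measurable_id.prodMk (hp.add_const _))).sub
      (hF.comp (measurable_id.prodMk hp))).const_smul _
  rw [funext fun a => clm_eq_sum_smulRight_sing (fderiv ℝ (F a) (p a))]
  exact Finset.aemeasurable_fun_sum _ fun i _ =>
    (ContinuousLinearMap.smulRightL ℝ (En n) V (EuclideanSpace.proj i)).continuous.measurable
      |>.comp_aemeasurable (happly _)

section Kernel

variable {T K0 lam : ℝ} {G : ℝ → En n → ℝ → En n → ℝ}

lemma KernelHyp.lintegral_enorm_le (hG : KernelHyp n T K0 lam G) (hlam : 0 < lam)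
    {s τ : ℝ} (hs : 0 ≤ s) (hsτ : s < τ) (hτ : τ ≤ T) (x : En n) :
    ∫⁻ η, ‖G s x τ η‖ₑ ≤ ENNReal.ofReal (K0 * (π / lam) ^ ((n : ℝ) / 2)) := by
  have h := lintegral_enorm_le_of_le_heatKernel hlam (sub_pos.2 hsτ) x
    fun η => (Real.norm_eq_abs _).trans_le (hG.2.2.1 s x τ η hs hsτ hτ)
  simpa [finrank_euclideanSpace_fin, neg_div] using h

lemma KernelHyp.lintegral_enorm_fderiv_le (hG : KernelHyp n T K0 lam G) (hlam : 0 < lam)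
    {s τ : ℝ} (hs : 0 ≤ s) (hsτ : s < τ) (hτ : τ ≤ T) (x : En n) :
    ∫⁻ η, ‖fderiv ℝ (fun y => G s y τ η) x‖ₑ
      ≤ ENNReal.ofReal (K0 * (π / lam) ^ ((n : ℝ) / 2) * (τ - s) ^ (-(1 : ℝ) / 2)) := by
  have h := lintegral_enorm_le_of_le_heatKernel hlam (sub_pos.2 hsτ) x
    fun η => hG.2.2.2 s x τ η hs hsτ hτ
  rwa [finrank_euclideanSpace_fin, show -((n : ℝ) + 1) / 2 + n / 2 = -1 / 2 by ring] at h

variable {E : Type*} [NormedAddCommGroup E] [NormedSpace ℝ E]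

lemma KernelHyp.measurable_slice (hG : KernelHyp n T K0 lam G) (s : ℝ) (x : En n) (τ : ℝ) :
    Measurable fun η => G s x τ η :=
  hG.1.comp (f := fun η : En n => (s, x, τ, η)) (by fun_prop)

lemma KernelHyp.aemeasurable_fderiv (hG : KernelHyp n T K0 lam G) {t τ : ℝ} (ht : 0 ≤ t)
    (htτ : t < τ) (hτ : τ ≤ T) (ξ : En n) :
    AEMeasurable fun η => fderiv ℝ (fun ξ' => G t ξ' τ η) ξ :=
  aemeasurable_fderiv_of_differentiableAt (F := fun η ξ' => G t ξ' τ η)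
    (hG.1.comp (f := fun q : En n × En n => (t, q.2, τ, q.1)) (by fun_prop))
    measurable_const (ae_of_all _ fun η => hG.2.1 t ξ τ η ht htτ hτ)

lemma KernelHyp.lintegral_enorm_smul_le (hG : KernelHyp n T K0 lam G) (hlam : 0 < lam)
    {s τ : ℝ} (hs : 0 ≤ s) (hsτ : s < τ) (hτ : τ ≤ T) (x : En n) {f : En n → E} {B : ℝ≥0∞}
    (hf : ∀ η, ‖f η‖ₑ ≤ B) :
    ∫⁻ η, ‖G s x τ η • f η‖ₑ ≤ ENNReal.ofReal (K0 * (π / lam) ^ ((n : ℝ) / 2)) * B :=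
  calc ∫⁻ η, ‖G s x τ η • f η‖ₑ
      ≤ ∫⁻ η, ‖G s x τ η‖ₑ * B := lintegral_mono fun η => by rw [enorm_smul]; gcongr; exact hf η
    _ = (∫⁻ η, ‖G s x τ η‖ₑ) * B := lintegral_mul_const _ (hG.measurable_slice s x τ).enorm
    _ ≤ _ := by gcongr; exact hG.lintegral_enorm_le hlam hs hsτ hτ x

lemma KernelHyp.integrable_smul (hG : KernelHyp n T K0 lam G) (hlam : 0 < lam)
    {s τ : ℝ} (hs : 0 ≤ s) (hsτ : s < τ) (hτ : τ ≤ T) (x : En n) {f : En n → E}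
    (hfm : AEStronglyMeasurable f) {B : ℝ≥0∞} (hB : B ≠ ⊤) (hf : ∀ η, ‖f η‖ₑ ≤ B) :
    Integrable fun η => G s x τ η • f η :=
  ⟨(hG.measurable_slice s x τ).aestronglyMeasurable.smul hfm,
    (hG.lintegral_enorm_smul_le hlam hs hsτ hτ x hf).trans_lt
      (ENNReal.mul_lt_top ENNReal.ofReal_lt_top hB.lt_top)⟩

lemma KernelHyp.lintegral_enorm_fderiv_smulRight_le (hG : KernelHyp n T K0 lam G)
    (hlam : 0 < lam) {t τ : ℝ} (ht : 0 ≤ t) (htτ : t < τ) (hτ : τ ≤ T) (ξ : En n)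
    {f : En n → E} {B : ℝ≥0∞} (hf : ∀ η, ‖f η‖ₑ ≤ B) :
    ∫⁻ η, ‖(fderiv ℝ (fun ξ' => G t ξ' τ η) ξ).smulRight (f η)‖ₑ
      ≤ ENNReal.ofReal (K0 * (π / lam) ^ ((n : ℝ) / 2) * (τ - t) ^ (-(1 : ℝ) / 2)) * B :=
  calc ∫⁻ η, ‖(fderiv ℝ (fun ξ' => G t ξ' τ η) ξ).smulRight (f η)‖ₑ
      ≤ ∫⁻ η, ‖fderiv ℝ (fun ξ' => G t ξ' τ η) ξ‖ₑ * B := lintegral_mono fun η => by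
        simp only [enorm_eq_nnnorm, ContinuousLinearMap.nnnorm_smulRight_apply, ENNReal.coe_mul]
        gcongr; exact hf η
    _ = (∫⁻ η, ‖fderiv ℝ (fun ξ' => G t ξ' τ η) ξ‖ₑ) * B :=
        lintegral_mul_const'' _ (hG.aemeasurable_fderiv ht htτ hτ ξ).enorm
    _ ≤ _ := by gcongr; exact hG.lintegral_enorm_fderiv_le hlam ht htτ hτ ξ

lemma KernelHyp.integrable_fderiv_smulRight (hG : KernelHyp n T K0 lam G) (hlam : 0 < lam)
    {t τ : ℝ} (ht : 0 ≤ t) (htτ : t < τ) (hτ : τ ≤ T) (ξ : En n) {f : En n → E}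
    (hfm : AEStronglyMeasurable f) {B : ℝ≥0∞} (hB : B ≠ ⊤) (hf : ∀ η, ‖f η‖ₑ ≤ B) :
    Integrable fun η => (fderiv ℝ (fun ξ' => G t ξ' τ η) ξ).smulRight (f η) :=
  ⟨isBoundedBilinearMap_smulRight.continuous.comp_aestronglyMeasurable
      ((hG.aemeasurable_fderiv ht htτ hτ ξ).aestronglyMeasurable.prodMk hfm),
    (hG.lintegral_enorm_fderiv_smulRight_le hlam ht htτ hτ ξ hf).trans_lt
      (ENNReal.mul_lt_top ENNReal.ofReal_lt_top hB.lt_top)⟩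

end Kernel

section Integrand

variable {d : ℕ} {T K0 lam L : ℝ} {G : ℝ → En n → ℝ → En n → ℝ}
  {g : ℝ → ℝ → En n → En n → En m → (En d →L[ℝ] En m) → (En d →L[ℝ] En m) → En m}
  {σ : ℝ → En n → (En d →L[ℝ] En n)} {E : Type*} [NormedAddCommGroup E] [NormedSpace ℝ E]

lemma GSHyp.enorm_le (hgs : GSHyp n m d L g σ) (t τ : ℝ) (ξ η : En n) (y : En m)
    (z ζ : En d →L[ℝ] En m) : ‖g t τ ξ η y z ζ‖ₑ ≤ ENNReal.ofReal L := by
  rw [← ofReal_norm]; exact ENNReal.ofReal_le_ofReal (hgs.2.1 t τ ξ η y z ζ)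

lemma GSHyp.enorm_sub_comp_le (hgs : GSHyp n m d L g σ) (t τ : ℝ) (ξ η : En n) (y y' : En m)
    (z z' ζ ζ' : En n →L[ℝ] En m) :
    ‖g t τ ξ η y (z.comp (σ τ η)) (ζ.comp (σ τ η))
        - g t τ ξ η y' (z'.comp (σ τ η)) (ζ'.comp (σ τ η))‖ₑ
      ≤ ENNReal.ofReal L
          * (‖y - y'‖ₑ + ENNReal.ofReal L * ‖z - z'‖ₑ + ENNReal.ofReal L * ‖ζ - ζ'‖ₑ) := by
  obtain ⟨-, -, hlip, -, hσ⟩ := hgs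
  have hL : 0 ≤ L := (norm_nonneg _).trans (hσ τ η)
  have hcomp (A : En n →L[ℝ] En m) : ‖A.comp (σ τ η)‖ₑ ≤ ENNReal.ofReal L * ‖A‖ₑ :=
    calc ‖A.comp (σ τ η)‖ₑ ≤ ‖A‖ₑ * ‖σ τ η‖ₑ := ContinuousLinearMap.opENorm_comp_le _ _
      _ ≤ ‖A‖ₑ * ENNReal.ofReal L := by
          gcongr; rw [← ofReal_norm]; exact ENNReal.ofReal_le_ofReal (hσ τ η)
      _ = _ := mul_comm _ _
  calc _ ≤ ENNReal.ofReal (L * (‖y - y'‖ + ‖z.comp (σ τ η) - z'.comp (σ τ η)‖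
          + ‖ζ.comp (σ τ η) - ζ'.comp (σ τ η)‖)) := by
        rw [← ofReal_norm]; exact ENNReal.ofReal_le_ofReal (hlip ..)
    _ = ENNReal.ofReal L * (‖y - y'‖ₑ + ‖(z - z').comp (σ τ η)‖ₑ
          + ‖(ζ - ζ').comp (σ τ η)‖ₑ) := by
        rw [ENNReal.ofReal_mul hL, ENNReal.ofReal_add (by positivity) (by positivity),
          ENNReal.ofReal_add (by positivity) (by positivity), ofReal_norm, ofReal_norm, ofReal_norm,
          ContinuousLinearMap.sub_comp, ContinuousLinearMap.sub_comp]
    _ ≤ _ := by gcongr <;> exact hcomp _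

def kernelGradConv (G : ℝ → En n → ℝ → En n → ℝ) (t : ℝ) (ξ : En n) (τ : ℝ) (f : En n → E) :
    En n →L[ℝ] E :=
  ∫ η, (fderiv ℝ (fun ξ' => G t ξ' τ η) ξ).smulRight (f η)

lemma KernelHyp.enorm_kernelGradConv_sub_le (hG : KernelHyp n T K0 lam G) (hlam : 0 < lam)
    {t τ : ℝ} (ht : 0 ≤ t) (htτ : t < τ) (hτ : τ ≤ T) (ξ : En n) {f h : En n → E}
    (hfm : AEStronglyMeasurable f) (hhm : AEStronglyMeasurable h) {B Δ : ℝ≥0∞} (hB : B ≠ ⊤)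
    (hfB : ∀ η, ‖f η‖ₑ ≤ B) (hhB : ∀ η, ‖h η‖ₑ ≤ B) (hfh : ∀ η, ‖f η - h η‖ₑ ≤ Δ) :
    ‖kernelGradConv G t ξ τ f - kernelGradConv G t ξ τ h‖ₑ
      ≤ ENNReal.ofReal (K0 * (π / lam) ^ ((n : ℝ) / 2) * (τ - t) ^ (-(1 : ℝ) / 2)) * Δ := by
  have hsub (c : En n →L[ℝ] ℝ) (a b : E) : c.smulRight a - c.smulRight b = c.smulRight (a - b) := by
    ext; simp [smul_sub]
  rw [kernelGradConv, kernelGradConv,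
    ← integral_sub (hG.integrable_fderiv_smulRight hlam ht htτ hτ ξ hfm hB hfB)
      (hG.integrable_fderiv_smulRight hlam ht htτ hτ ξ hhm hB hhB)]
  simp only [hsub]
  exact (enorm_integral_le_lintegral_enorm _).trans
    (hG.lintegral_enorm_fderiv_smulRight_le hlam ht htτ hτ ξ hfh)

def smapIntegrand (G : ℝ → En n → ℝ → En n → ℝ)
    (g : ℝ → ℝ → En n → En n → En m → (En d →L[ℝ] En m) → (En d →L[ℝ] En m) → En m)
    (σ : ℝ → En n → (En d →L[ℝ] En n)) (θ : ℝ → ℝ → En n → En n → En m) (t s : ℝ)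
    (ξ x : En n) (τ : ℝ) (η : En n) : En m :=
  G s x τ η • g t τ ξ η (θ τ τ η η) ((fderiv ℝ (fun y => θ t τ ξ y) η).comp (σ τ η))
    ((kernelGradConv G t ξ τ fun η' => θ τ τ η' η').comp (σ τ η))

lemma Smap_eq_integral_smapIntegrand (θ : ℝ → ℝ → En n → En n → En m) (t s : ℝ) (ξ x : En n) :
    Smap n m d T G g σ θ t s ξ x = ∫ τ in Ioc s T, ∫ η, smapIntegrand G g σ θ t s ξ x τ η :=
  rfl

variable {θ : ℝ → ℝ → En n → En n → En m}

lemma measurable_apply_diag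
    (hθ : Measurable fun q : ℝ × ℝ × En n × En n => θ q.1 q.2.1 q.2.2.1 q.2.2.2) :
    Measurable fun q : ℝ × En n => θ q.1 q.1 q.2 q.2 :=
  hθ.comp (f := fun q : ℝ × En n => (q.1, q.1, q.2, q.2)) (by fun_prop)

lemma measurable_diag_slice
    (hθ : Measurable fun q : ℝ × ℝ × En n × En n => θ q.1 q.2.1 q.2.2.1 q.2.2.2) (τ : ℝ) :
    Measurable fun η => θ τ τ η η :=
  (measurable_apply_diag hθ).comp (f := fun η : En n => (τ, η)) (by fun_prop)

lemma integrable_smapIntegrand (hG : KernelHyp n T K0 lam G) (hgs : GSHyp n m d L g σ)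
    (hlam : 0 < lam) (hθ : Measurable fun q : ℝ × ℝ × En n × En n => θ q.1 q.2.1 q.2.2.1 q.2.2.2)
    {t s τ : ℝ} (hs : 0 ≤ s) (hτ : τ ∈ Ioc s T) (ξ x : En n) :
    Integrable (smapIntegrand G g σ θ t s ξ x τ) := by
  have hσ : Measurable fun η => σ τ η :=
    hgs.2.2.2.1.comp (f := fun η : En n => (τ, η)) (by fun_prop)
  have hz : Measurable fun η => (fderiv ℝ (fun y => θ t τ ξ y) η).comp (σ τ η) :=
    isBoundedBilinearMap_comp.continuous.measurable.comp ((measurable_fderiv ℝ _).prodMk hσ)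
  have hζ : Measurable fun η =>
      (kernelGradConv G t ξ τ fun η' => θ τ τ η' η').comp (σ τ η) :=
    isBoundedBilinearMap_comp.continuous.measurable.comp (measurable_const.prodMk hσ)
  refine hG.integrable_smul hlam hs hτ.1 hτ.2 x ?_ ENNReal.ofReal_ne_top
    fun η => hgs.enorm_le _ _ _ _ _ _ _
  exact (hgs.1.comp <| measurable_const.prodMk <| measurable_const.prodMk <|
    measurable_const.prodMk <| measurable_id.prodMk <| (measurable_diag_slice hθ τ).prodMk <|
    hz.prodMk hζ).aestronglyMeasurable

lemma aestronglyMeasurable_smapIntegrand (hG : KernelHyp n T K0 lam G)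
    (hgs : GSHyp n m d L g σ)
    (hθ : Measurable fun q : ℝ × ℝ × En n × En n => θ q.1 q.2.1 q.2.2.1 q.2.2.2)
    {t s : ℝ} (ht : 0 ≤ t) (hts : t ≤ s) (ξ x : En n)
    (hdiff : ∀ τ ∈ Ioc s T, ∀ η, DifferentiableAt ℝ (fun y => θ t τ ξ y) η) :
    AEStronglyMeasurable (fun q : ℝ × En n => smapIntegrand G g σ θ t s ξ x q.1 q.2)
      ((volume.restrict (Ioc s T)).prod volume) := by
  have hIoc : ∀ᵐ q ∂(volume.restrict (Ioc s T)).prod (volume : Measure (En n)),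
      q.1 ∈ Ioc s T :=
    Measure.quasiMeasurePreserving_fst.ae (ae_restrict_mem measurableSet_Ioc)
  have hdiag := measurable_apply_diag hθ
  have hconv : AEStronglyMeasurable (fun τ => kernelGradConv G t ξ τ fun η => θ τ τ η η)
      (volume.restrict (Ioc s T)) := by
    have hdG : AEMeasurable (fun q : ℝ × En n => fderiv ℝ (fun ξ' => G t ξ' q.1 q.2) ξ)
        ((volume.restrict (Ioc s T)).prod volume) :=
      aemeasurable_fderiv_of_differentiableAt (F := fun q ξ' => G t ξ' q.1 q.2)
        (hG.1.comp (f := fun p : (ℝ × En n) × En n => (t, p.2, p.1.1, p.1.2)) (by fun_prop))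
        measurable_const (hIoc.mono fun q hq => hG.2.1 t ξ q.1 q.2 ht (hts.trans_lt hq.1) hq.2)
    exact (isBoundedBilinearMap_smulRight.continuous.comp_aestronglyMeasurable
      (hdG.aestronglyMeasurable.prodMk hdiag.aestronglyMeasurable)).integral_prod_right'
  have hdθ : AEMeasurable (fun q : ℝ × En n => fderiv ℝ (fun y => θ t q.1 ξ y) q.2)
      ((volume.restrict (Ioc s T)).prod volume) :=
    aemeasurable_fderiv_of_differentiableAt (F := fun q y => θ t q.1 ξ y)
      (hθ.comp (f := fun p : (ℝ × En n) × En n => (t, p.1.1, ξ, p.2)) (by fun_prop))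
      measurable_snd (hIoc.mono fun q hq => hdiff q.1 hq q.2)
  have hσ : Measurable fun q : ℝ × En n => σ q.1 q.2 := hgs.2.2.2.1
  have hcomp := (isBoundedBilinearMap_comp (𝕜 := ℝ) (E := En d) (F := En n) (G := En m)).continuous
  have hz := hcomp.measurable.comp_aemeasurable (hdθ.prodMk hσ.aemeasurable)
  have hζ := hcomp.measurable.comp_aemeasurable
    ((hconv.comp_quasiMeasurePreserving
      (Measure.quasiMeasurePreserving_fst (ν := (volume : Measure (En n))))).aemeasurable.prodMk
      hσ.aemeasurable)
  refine (hG.1.comp (f := fun q : ℝ × En n => (s, x, q.1, q.2))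
    (by fun_prop)).aestronglyMeasurable.smul ?_
  exact (hgs.1.comp_aemeasurable <| aemeasurable_const.prodMk <|
    measurable_fst.aemeasurable.prodMk <| aemeasurable_const.prodMk <|
    measurable_snd.aemeasurable.prodMk <| hdiag.aemeasurable.prodMk <| hz.prodMk hζ
    ).aestronglyMeasurable

lemma integrableOn_integral_smapIntegrand (hG : KernelHyp n T K0 lam G)
    (hgs : GSHyp n m d L g σ) (hlam : 0 < lam)
    (hθ : Measurable fun q : ℝ × ℝ × En n × En n => θ q.1 q.2.1 q.2.2.1 q.2.2.2)
    {t s : ℝ} (ht : 0 ≤ t) (hts : t ≤ s) (ξ x : En n)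
    (hdiff : ∀ τ ∈ Ioc s T, ∀ η, DifferentiableAt ℝ (fun y => θ t τ ξ y) η) :
    IntegrableOn (fun τ => ∫ η, smapIntegrand G g σ θ t s ξ x τ η) (Ioc s T) := by
  refine ⟨(aestronglyMeasurable_smapIntegrand hG hgs hθ ht hts ξ x hdiff).integral_prod_right',
    ?_⟩
  calc ∫⁻ τ in Ioc s T, ‖∫ η, smapIntegrand G g σ θ t s ξ x τ η‖ₑ
      ≤ ∫⁻ _ in Ioc s T, ENNReal.ofReal (K0 * (π / lam) ^ ((n : ℝ) / 2)) * ENNReal.ofReal L :=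
        setLIntegral_mono' measurableSet_Ioc fun τ hτ =>
          (enorm_integral_le_lintegral_enorm _).trans <|
            hG.lintegral_enorm_smul_le hlam (ht.trans hts) hτ.1 hτ.2 x
              fun η => hgs.enorm_le _ _ _ _ _ _ _
    _ < ⊤ := by rw [setLIntegral_const, Real.volume_Ioc]; finiteness

lemma enorm_integral_smapIntegrand_sub_le (hG : KernelHyp n T K0 lam G)
    (hgs : GSHyp n m d L g σ) (hlam : 0 < lam) {θ θh : ℝ → ℝ → En n → En n → En m}
    (hθ : Measurable fun q : ℝ × ℝ × En n × En n => θ q.1 q.2.1 q.2.2.1 q.2.2.2)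
    (hθh : Measurable fun q : ℝ × ℝ × En n × En n => θh q.1 q.2.1 q.2.2.1 q.2.2.2)
    {t s τ : ℝ} (ht : 0 ≤ t) (hts : t ≤ s) (hτ : τ ∈ Ioc s T) (ξ x : En n) {B Δ D : ℝ≥0∞}
    (hB : B ≠ ⊤) (hθB : ∀ η, ‖θ τ τ η η‖ₑ ≤ B) (hθhB : ∀ η, ‖θh τ τ η η‖ₑ ≤ B)
    (hΔ : ∀ η, ‖θ τ τ η η - θh τ τ η η‖ₑ ≤ Δ)
    (hD : ∀ η, ‖fderiv ℝ (fun y => θ t τ ξ y) η - fderiv ℝ (fun y => θh t τ ξ y) η‖ₑ ≤ D) :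
    ‖(∫ η, smapIntegrand G g σ θ t s ξ x τ η) - ∫ η, smapIntegrand G g σ θh t s ξ x τ η‖ₑ
      ≤ ENNReal.ofReal (K0 * (π / lam) ^ ((n : ℝ) / 2)) * ENNReal.ofReal L * Δ
        + ENNReal.ofReal (K0 * (π / lam) ^ ((n : ℝ) / 2)) ^ 2 * ENNReal.ofReal L ^ 2 * Δ
          * ENNReal.ofReal ((τ - s) ^ (-(1 : ℝ) / 2))
        + ENNReal.ofReal (K0 * (π / lam) ^ ((n : ℝ) / 2)) * ENNReal.ofReal L ^ 2 * D := by
  set c := ENNReal.ofReal (K0 * (π / lam) ^ ((n : ℝ) / 2))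
  set ℓ := ENNReal.ofReal L
  have hs : 0 ≤ s := ht.trans hts
  have hsing : ENNReal.ofReal (K0 * (π / lam) ^ ((n : ℝ) / 2) * (τ - t) ^ (-(1 : ℝ) / 2))
      ≤ c * ENNReal.ofReal ((τ - s) ^ (-(1 : ℝ) / 2)) := by
    rw [ENNReal.ofReal_mul' (Real.rpow_nonneg (sub_nonneg.2 (hts.trans hτ.1.le)) _)]
    gcongr c * ENNReal.ofReal ?_
    exact Real.rpow_le_rpow_of_nonpos (sub_pos.2 hτ.1) (by linarith) (by norm_num)
  have hconv := hG.enorm_kernelGradConv_sub_le hlam ht (hts.trans_lt hτ.1) hτ.2 ξ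
    (measurable_diag_slice hθ τ).aestronglyMeasurable
    (measurable_diag_slice hθh τ).aestronglyMeasurable hB hθB hθhB hΔ
  calc _ ≤ c * (ℓ * (Δ + ℓ * D + ℓ * (c * ENNReal.ofReal ((τ - s) ^ (-(1 : ℝ) / 2)) * Δ))) := by
        rw [← integral_sub (integrable_smapIntegrand hG hgs hlam hθ hs hτ ξ x)
          (integrable_smapIntegrand hG hgs hlam hθh hs hτ ξ x)]
        refine (enorm_integral_le_lintegral_enorm _).trans ?_
        simp only [smapIntegrand, ← smul_sub]
        refine hG.lintegral_enorm_smul_le hlam hs hτ.1 hτ.2 x fun η =>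
          (hgs.enorm_sub_comp_le ..).trans ?_
        gcongr
        exacts [hΔ η, hD η, hconv.trans (by gcongr)]
    _ = _ := by ring

end Integrand

lemma enorm_diag_le_iSup {E : Type*} [NormedAddCommGroup E] (φ : ℝ → ℝ → En n → En n → E)
    {S T τ : ℝ} (hτ0 : 0 ≤ τ) (hSτ : S ≤ τ) (hτT : τ ≤ T) (η : En n) :
    ‖φ τ τ η η‖ₑ ≤ ⨆ (t' : Icc (0:ℝ) T) (τ' : Icc (max t'.1 S) T) (ξ' : En n) (x' : En n),
      (‖φ t'.1 τ'.1 ξ' x'‖₊ : ℝ≥0∞) :=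
  le_iSup_of_le ⟨τ, hτ0, hτT⟩ <| le_iSup_of_le ⟨τ, max_le le_rfl hSτ, hτT⟩ <|
    le_iSup_of_le η <| le_iSup_of_le η le_rfl

lemma memY.iSup_enorm_ne_top {S T p : ℝ} {θ : ℝ → ℝ → En n → En n → En m}
    (hθ : memY n m S T p θ) :
    ⨆ (t' : Icc (0:ℝ) T) (τ : Icc (max t'.1 S) T) (ξ' : En n) (x' : En n),
      (‖θ t'.1 τ.1 ξ' x'‖₊ : ℝ≥0∞) ≠ ⊤ :=
  (ENNReal.add_ne_top.1 hθ.2.2).2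

lemma lintegral_Ioc_ofReal_rpow_sub {s T r : ℝ} (hsT : s ≤ T) (hr : -1 < r) :
    ∫⁻ τ in Ioc s T, ENNReal.ofReal ((τ - s) ^ r)
      = ENNReal.ofReal ((T - s) ^ (r + 1) / (r + 1)) := by
  have hint : IntegrableOn (fun τ => (τ - s) ^ r) (Ioc s T) := by
    have h := (intervalIntegral.intervalIntegrable_rpow' hr (a := 0) (b := T - s)).comp_sub_right s
    rw [zero_add, sub_add_cancel] at h
    exact (intervalIntegrable_iff_integrableOn_Ioc_of_le hsT).1 h
  rw [← ofReal_integral_eq_lintegral_ofReal hint (ae_restrict_of_forall_mem measurableSet_Ioc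
      fun τ hτ => Real.rpow_nonneg (sub_nonneg.2 hτ.1.le) r),
    ← intervalIntegral.integral_of_le hsT,
    intervalIntegral.integral_comp_sub_right (fun y => y ^ r), sub_self, integral_rpow (.inl hr),
    Real.zero_rpow (by linarith), sub_zero]

/-- `(τ - s)^(-1/2)` integrates to `2 √(T - s)` over `(s, T]`, and `T - s ≤ √T √(T - s)`. -/
lemma setLIntegral_Ioc_singular_bound_le {s T : ℝ} (hs : 0 ≤ s) (hsT : s ≤ T)
    {c ℓ : ℝ≥0∞} (hc : c ≠ ⊤) (hℓ : ℓ ≠ ⊤) (Δ : ℝ≥0∞) (D : ℝ → ℝ≥0∞) :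
    ∫⁻ τ in Ioc s T, (c * ℓ * Δ + c ^ 2 * ℓ ^ 2 * Δ * ENNReal.ofReal ((τ - s) ^ (-(1 : ℝ) / 2))
        + c * ℓ ^ 2 * D τ)
      ≤ (c * ℓ * ENNReal.ofReal √T + 2 * c ^ 2 * ℓ ^ 2 + c * ℓ ^ 2) * (∫⁻ τ in Ioc s T, D τ)
        + (c * ℓ * ENNReal.ofReal √T + 2 * c ^ 2 * ℓ ^ 2 + c * ℓ ^ 2)
          * ENNReal.ofReal ((T - s) ^ ((1 : ℝ) / 2)) * Δ := by
  have hsing : ∫⁻ τ in Ioc s T, ENNReal.ofReal ((τ - s) ^ (-(1 : ℝ) / 2))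
      = 2 * ENNReal.ofReal √(T - s) := by
    rw [lintegral_Ioc_ofReal_rpow_sub hsT (by norm_num), show -(1 : ℝ) / 2 + 1 = 1 / 2 by norm_num,
      ← Real.sqrt_eq_rpow, div_eq_mul_inv, show (1 / 2 : ℝ)⁻¹ = 2 by norm_num, mul_comm,
      ENNReal.ofReal_mul zero_le_two, ENNReal.ofReal_ofNat]
  rw [← Real.sqrt_eq_rpow]
  set a := ENNReal.ofReal √(T - s)
  have hvol : ENNReal.ofReal (T - s) ≤ ENNReal.ofReal √T * a := by
    rw [← ENNReal.ofReal_mul (Real.sqrt_nonneg _)]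
    refine ENNReal.ofReal_le_ofReal ?_
    calc T - s = √(T - s) * √(T - s) := (Real.mul_self_sqrt (by linarith)).symm
      _ ≤ √T * √(T - s) := by gcongr; linarith
  have hρ : Measurable fun τ : ℝ => ENNReal.ofReal ((τ - s) ^ (-(1 : ℝ) / 2)) := by fun_prop
  have hconst : Measurable fun τ : ℝ =>
      c * ℓ * Δ + c ^ 2 * ℓ ^ 2 * Δ * ENNReal.ofReal ((τ - s) ^ (-(1 : ℝ) / 2)) := by fun_prop
  rw [lintegral_add_left hconst,
    lintegral_add_left measurable_const, setLIntegral_const, lintegral_const_mul _ hρ,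
    lintegral_const_mul' _ _ (by finiteness), hsing, Real.volume_Ioc]
  calc c * ℓ * Δ * ENNReal.ofReal (T - s) + c ^ 2 * ℓ ^ 2 * Δ * (2 * a)
        + c * ℓ ^ 2 * (∫⁻ τ in Ioc s T, D τ)
      ≤ c * ℓ * Δ * (ENNReal.ofReal √T * a) + c ^ 2 * ℓ ^ 2 * Δ * (2 * a)
        + c * ℓ ^ 2 * (∫⁻ τ in Ioc s T, D τ) := by gcongr
    _ ≤ c * ℓ * Δ * (ENNReal.ofReal √T * a) + c ^ 2 * ℓ ^ 2 * Δ * (2 * a)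
        + c * ℓ ^ 2 * (∫⁻ τ in Ioc s T, D τ)
        + ((c * ℓ * ENNReal.ofReal √T + 2 * c ^ 2 * ℓ ^ 2) * (∫⁻ τ in Ioc s T, D τ)
          + c * ℓ ^ 2 * a * Δ) := le_self_add
    _ = _ := by ring

theorem stmt_15_general (n m d : ℕ) (T K0 lam L p : ℝ) (hlam : 0 < lam) :
    ∃ K : ℝ≥0,
      ∀ (G : ℝ → En n → ℝ → En n → ℝ)
        (g : ℝ → ℝ → En n → En n → En m → (En d →L[ℝ] En m) → (En d →L[ℝ] En m) → En m)
        (σ : ℝ → En n → (En d →L[ℝ] En n)),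
        KernelHyp n T K0 lam G → GSHyp n m d L g σ →
        ∀ S : ℝ, 0 ≤ S → S < T →
        ∀ θ θh : ℝ → ℝ → En n → En n → En m,
          memY n m S T p θ → memY n m S T p θh →
          ∀ t ∈ Icc (0:ℝ) T, ∀ s : ℝ, max t S ≤ s → s ≤ T → ∀ ξ x : En n,
            (‖Smap n m d T G g σ θ t s ξ x - Smap n m d T G g σ θh t s ξ x‖₊ : ℝ≥0∞)
              ≤ (K : ℝ≥0∞) *
                  (∫⁻ τ in Ioc s T,
                    ⨆ (ξ' : En n) (x' : En n),
                      (‖fderiv ℝ (fun y => θ t τ ξ' y) x'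
                          - fderiv ℝ (fun y => θh t τ ξ' y) x'‖₊ : ℝ≥0∞))
                + (K : ℝ≥0∞) * ENNReal.ofReal ((T - s) ^ ((1:ℝ)/2)) *
                    ⨆ (t' : Icc (0:ℝ) T) (τ : Icc (max t'.1 S) T) (ξ' : En n) (x' : En n),
                      (‖θ t'.1 τ.1 ξ' x' - θh t'.1 τ.1 ξ' x'‖₊ : ℝ≥0∞) := by
  set c := ENNReal.ofReal (K0 * (π / lam) ^ ((n : ℝ) / 2))
  set ℓ := ENNReal.ofReal L
  refine ⟨(c * ℓ * ENNReal.ofReal √T + 2 * c ^ 2 * ℓ ^ 2 + c * ℓ ^ 2).toNNReal, ?_⟩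
  intro G g σ hG hgs S _ _ θ θh hθ hθh t ht s hs hsT ξ x
  rw [ENNReal.coe_toNNReal (by finiteness)]
  have hts : t ≤ s := (le_max_left t S).trans hs
  set Δ : ℝ≥0∞ := ⨆ (t' : Icc (0:ℝ) T) (τ : Icc (max t'.1 S) T) (ξ' : En n) (x' : En n),
    (‖θ t'.1 τ.1 ξ' x' - θh t'.1 τ.1 ξ' x'‖₊ : ℝ≥0∞)
  set D : ℝ → ℝ≥0∞ := fun τ => ⨆ (ξ' : En n) (x' : En n),
    (‖fderiv ℝ (fun y => θ t τ ξ' y) x' - fderiv ℝ (fun y => θh t τ ξ' y) x'‖₊ : ℝ≥0∞)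
  have hdiff {φ : ℝ → ℝ → En n → En n → En m} (hφ : memY n m S T p φ) (τ : ℝ) (hτ : τ ∈ Ioc s T)
      (η : En n) : DifferentiableAt ℝ (fun y => φ t τ ξ y) η :=
    hφ.2.1 t ht τ ⟨hs.trans hτ.1.le, hτ.2⟩ ξ η
  have hτ (τ : ℝ) (hτ : τ ∈ Ioc s T) :
      ‖(∫ η, smapIntegrand G g σ θ t s ξ x τ η) - ∫ η, smapIntegrand G g σ θh t s ξ x τ η‖ₑ
        ≤ c * ℓ * Δ + c ^ 2 * ℓ ^ 2 * Δ * ENNReal.ofReal ((τ - s) ^ (-(1 : ℝ) / 2))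
          + c * ℓ ^ 2 * D τ := by
    have hτ0 : 0 ≤ τ := ht.1.trans (hts.trans hτ.1.le)
    have hSτ : S ≤ τ := (le_max_right t S).trans (hs.trans hτ.1.le)
    exact enorm_integral_smapIntegrand_sub_le hG hgs hlam hθ.1 hθh.1 ht.1 hts hτ ξ x
      (ENNReal.add_ne_top.2 ⟨hθ.iSup_enorm_ne_top, hθh.iSup_enorm_ne_top⟩)
      (fun η => (enorm_diag_le_iSup θ hτ0 hSτ hτ.2 η).trans le_self_add)
      (fun η => (enorm_diag_le_iSup θh hτ0 hSτ hτ.2 η).trans le_add_self)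
      (enorm_diag_le_iSup (fun a b y z => θ a b y z - θh a b y z) hτ0 hSτ hτ.2)
      (fun η => le_iSup₂ (f := fun ξ' x' => (‖fderiv ℝ (fun y => θ t τ ξ' y) x'
        - fderiv ℝ (fun y => θh t τ ξ' y) x'‖₊ : ℝ≥0∞)) ξ η)
  rw [Smap_eq_integral_smapIntegrand, Smap_eq_integral_smapIntegrand,
    ← integral_sub (integrableOn_integral_smapIntegrand hG hgs hlam hθ.1 ht.1 hts ξ x (hdiff hθ))
      (integrableOn_integral_smapIntegrand hG hgs hlam hθh.1 ht.1 hts ξ x (hdiff hθh))]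
  exact (enorm_integral_le_lintegral_enorm _).trans <|
    (setLIntegral_mono' measurableSet_Ioc hτ).trans <|
      setLIntegral_Ioc_singular_bound_le (ht.1.trans hts) hsT ENNReal.ofReal_ne_top
        ENNReal.ofReal_ne_top Δ D

/-- Pointwise contraction-type estimate for the operator `S`. -/
theorem stmt_15 (n m d : ℕ) (hn : 1 ≤ n) (hm : 1 ≤ m) (hd : 1 ≤ d)
    (T K0 lam L p : ℝ) (hT : 0 < T) (hK0 : 0 < K0) (hlam : 0 < lam) (hL : 0 < L)
    (hp : 1 < p) (hp2 : p < 2) :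
    ∃ K : ℝ≥0,
      ∀ (G : ℝ → En n → ℝ → En n → ℝ)
        (g : ℝ → ℝ → En n → En n → En m → (En d →L[ℝ] En m) → (En d →L[ℝ] En m) → En m)
        (σ : ℝ → En n → (En d →L[ℝ] En n)),
        KernelHyp n T K0 lam G → GSHyp n m d L g σ →
        ∀ S : ℝ, 0 ≤ S → S < T →
        ∀ θ θh : ℝ → ℝ → En n → En n → En m,
          memY n m S T p θ → memY n m S T p θh →
          ∀ t ∈ Icc (0:ℝ) T, ∀ s : ℝ, max t S ≤ s → s ≤ T → ∀ ξ x : En n,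
            (‖Smap n m d T G g σ θ t s ξ x - Smap n m d T G g σ θh t s ξ x‖₊ : ℝ≥0∞)
              ≤ (K : ℝ≥0∞) *
                  (∫⁻ τ in Ioc s T,
                    ⨆ (ξ' : En n) (x' : En n),
                      (‖fderiv ℝ (fun y => θ t τ ξ' y) x'
                          - fderiv ℝ (fun y => θh t τ ξ' y) x'‖₊ : ℝ≥0∞))
                + (K : ℝ≥0∞) * ENNReal.ofReal ((T - s) ^ ((1:ℝ)/2)) *
                    ⨆ (t' : Icc (0:ℝ) T) (τ : Icc (max t'.1 S) T) (ξ' : En n) (x' : En n),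
                      (‖θ t'.1 τ.1 ξ' x' - θh t'.1 τ.1 ξ' x'‖₊ : ℝ≥0∞) :=
  stmt_15_general n m d T K0 lam L p hlam

end
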